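/- Every position (a,b,c,d,e,f) ∈ ℕ⁶ satisfying a+b = d+e and b+c = e+f can be written as a non-negative integer linear combination of the five vectors z₁=(1,0,0,1,0,0), z₂=(0,1,0,0,1,0), z₃=(0,0,1,0,0,1), z₄=(1,0,1,0,1,0), z₅=(0,1,0,1,0,1), and conversely every such non-negative linear combination satisfies both equations. -/

import Mathlib

/-! Comparing the second coordinate with the fifth: if `b ≤ e` the position is
`d z₁ + b z₂ + f z₃ + (e - b) z₄`, otherwise it is `a z₁ + e z₂ + c z₃ + (b - e) z₅`;
both equations then fix the remaining coordinates. -/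

lemma combination_eq_vec (c₁ c₂ c₃ c₄ c₅ : ℕ) :
    (fun i => c₁ * ![1,0,0,1,0,0] i + c₂ * ![0,1,0,0,1,0] i +
      c₃ * ![0,0,1,0,0,1] i + c₄ * ![1,0,1,0,1,0] i + c₅ * ![0,1,0,1,0,1] i) =
      ![c₁ + c₄, c₂ + c₅, c₃ + c₄, c₁ + c₅, c₂ + c₄, c₃ + c₅] := by
  funext i
  fin_cases i <;> simp [Matrix.cons_val]

lemma fin_six_eq_vec_iff {α : Type*} (p : Fin 6 → α) (a b c d e f : α) :
    p = ![a, b, c, d, e, f] ↔ p 0 = a ∧ p 1 = b ∧ p 2 = c ∧ p 3 = d ∧ p 4 = e ∧ p 5 = f := by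
  simp [funext_iff, Fin.forall_fin_succ, Fin.succ]

lemma exists_cone_coeffs {a b c d e f : ℕ} (h₁ : a + b = d + e) (h₂ : b + c = e + f) :
    ∃ c₁ c₂ c₃ c₄ c₅ : ℕ, a = c₁ + c₄ ∧ b = c₂ + c₅ ∧ c = c₃ + c₄ ∧
      d = c₁ + c₅ ∧ e = c₂ + c₄ ∧ f = c₃ + c₅ := by
  rcases le_total b e with hbe | heb
  · exact ⟨d, b, f, e - b, 0, by omega⟩
  · exact ⟨a, e, c, 0, b - e, by omega⟩

theorem cn63_cone (p : Fin 6 → ℕ) :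
    (p 0 + p 1 = p 3 + p 4 ∧ p 1 + p 2 = p 4 + p 5) ↔
      ∃ c₁ c₂ c₃ c₄ c₅ : ℕ,
        p = fun i => c₁ * ![1,0,0,1,0,0] i + c₂ * ![0,1,0,0,1,0] i +
          c₃ * ![0,0,1,0,0,1] i + c₄ * ![1,0,1,0,1,0] i + c₅ * ![0,1,0,1,0,1] i := by
  simp only [combination_eq_vec, fin_six_eq_vec_iff]
  constructor
  · rintro ⟨h₁, h₂⟩
    exact exists_cone_coeffs h₁ h₂
  · rintro ⟨c₁, c₂, c₃, c₄, c₅, h₀, h₁, h₂, h₃, h₄, h₅⟩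
    omega
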